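/- arXiv:0812.2505 — 2 statements merged into one kernel-verified Lean document; each statement's English description precedes it below -/
import Mathlib

section
/- Let T₁ be the unique 2-dimensional simple kS₄-module, let t ∈ S₄ be any transposition, and let C = ⟨t⟩ be the subgroup of order 2 it generates. Then the restriction Res^{S₄}_C T₁ is a free kC-module of rank 1. -/
/-! Shared definitions: representations of a group over a commutative ring,
equivariant maps, sub/quotient representations, projectivity, syzygies,
stable endomorphism rings, Ext^1 dimensions, induced/restricted representations,
Witt vectors, lifts and universal deformation rings. -/

open scoped TensorProduct

noncomputable section

/-- A representation of the group `G` on a module over the commutative ring `R`,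
bundled with its carrier.  For `R = k` a field this is the same data as a
`kG`-module. -/
structure GRep (R : Type) [CommRing R] (G : Type) [Group G] : Type 1 where
  V : Type
  [acg : AddCommGroup V]
  [mod : Module R V]
  ρ : Representation R G V

attribute [instance] GRep.acg GRep.mod

namespace GRep

variable {R : Type} [CommRing R] {G : Type} [Group G]

/-- `f` is a homomorphism of representations (i.e. a `RG`-module homomorphism). -/
def IsRepHom (M N : GRep R G) (f : M.V →ₗ[R] N.V) : Prop :=
  ∀ g : G, f.comp (M.ρ g) = (N.ρ g).comp f

/-- `M` and `N` are isomorphic representations (i.e. isomorphic `RG`-modules). -/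
def IsoRep (M N : GRep R G) : Prop :=
  ∃ e : M.V ≃ₗ[R] N.V, IsRepHom M N (e : M.V →ₗ[R] N.V)

/-- An `R`-submodule is a subrepresentation if it is stable under the `G`-action. -/
def IsSubrep (M : GRep R G) (N : Submodule R M.V) : Prop :=
  ∀ (g : G) (x : M.V), x ∈ N → M.ρ g x ∈ N

open Classical in
/-- The subrepresentation on a `G`-stable submodule (trivial action as a junk
value if `N` is not `G`-stable). -/
def sub (M : GRep R G) (N : Submodule R M.V) : GRep R G where
  V := ↥N
  ρ := if h : IsSubrep M N then
    { toFun := fun g => (M.ρ g).restrict (fun x hx => h g x hx)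
      map_one' := by
        ext x
        simp [LinearMap.restrict_apply]
      map_mul' := fun g₁ g₂ => by
        ext x
        simp [LinearMap.restrict_apply] }
    else 1

open Classical in
/-- The quotient representation on `M.V ⧸ N` (trivial action as a junk value if
`N` is not `G`-stable). -/
def quot (M : GRep R G) (N : Submodule R M.V) : GRep R G where
  V := M.V ⧸ N
  ρ := if h : IsSubrep M N then
    { toFun := fun g => Submodule.mapQ N N (M.ρ g) (fun x hx => h g x hx)
      map_one' := by
        apply Submodule.linearMap_qext
        ext x
        simp
      map_mul' := fun g₁ g₂ => by
        apply Submodule.linearMap_qext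
        ext x
        simp }
    else 1

/-- The direct sum of two representations. -/
def prod (M N : GRep R G) : GRep R G where
  V := M.V × N.V
  ρ := {
    toFun := fun g => (M.ρ g).prodMap (N.ρ g)
    map_one' := by ext x <;> simp
    map_mul' := fun g₁ g₂ => by ext x <;> simp }

/-- The restriction of a representation of `G` to a subgroup `L`. -/
def res (L : Subgroup G) (M : GRep R G) : GRep R ↥L where
  V := M.V
  ρ := M.ρ.comp L.subtype

/-- A representation is projective if the corresponding module over the group
algebra `R[G]` is projective. -/
def IsProjectiveRep (M : GRep R G) : Prop :=
  Module.Projective (MonoidAlgebra R G) M.ρ.asModule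

/-- A representation is simple (irreducible) if it is nonzero and its only
subrepresentations are `⊥` and `⊤`. -/
def IsSimpleRep (M : GRep R G) : Prop :=
  Nontrivial M.V ∧ ∀ N : Submodule R M.V, IsSubrep M N → N = ⊥ ∨ N = ⊤

/-- A representation is indecomposable if it is nonzero and admits no nontrivial
direct sum decomposition into subrepresentations. -/
def IsIndecomposableRep (M : GRep R G) : Prop :=
  Nontrivial M.V ∧ ∀ N₁ N₂ : Submodule R M.V, IsSubrep M N₁ → IsSubrep M N₂ →
    IsCompl N₁ N₂ → N₁ = ⊥ ∨ N₂ = ⊥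

/-- The trivial one-dimensional representation of `G` over `R`. -/
def triv (R : Type) [CommRing R] (G : Type) [Group G] : GRep R G where
  V := R
  ρ := 1

/-- The regular representation `R[G]`. -/
def reg (R : Type) [CommRing R] (G : Type) [Group G] : GRep R G where
  V := G →₀ R
  ρ := {
    toFun := fun g => Finsupp.lmapDomain R R (g • ·)
    map_one' := by ext; simp
    map_mul' := fun x y => by ext; simp [mul_assoc] }

/-- The representation on `Hom_k(M.V, N.V)` given by conjugation
(`End_k(V)` for `M = N`). -/
def linHom (M N : GRep R G) : GRep R G where
  V := M.V →ₗ[R] N.V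
  ρ := M.ρ.linHom N.ρ

/-- The `R`-submodule of `RG`-module homomorphisms `M → N`. -/
def homSub (M N : GRep R G) : Submodule R (M.V →ₗ[R] N.V) where
  carrier := {f | IsRepHom M N f}
  add_mem' := by
    intro f₁ f₂ h₁ h₂ g
    simp only [LinearMap.add_comp, LinearMap.comp_add, h₁ g, h₂ g]
  zero_mem' := by
    intro g
    simp
  smul_mem' := by
    intro c f h g
    simp only [LinearMap.smul_comp, LinearMap.comp_smul, h g]

/-- `f : M → N` factors through a projective `RG`-module. -/
def FactorsThruProj (M N : GRep R G) (f : M.V →ₗ[R] N.V) : Prop :=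
  ∃ P : GRep R G, IsProjectiveRep P ∧
    ∃ (a : M.V →ₗ[R] P.V) (b : P.V →ₗ[R] N.V),
      IsRepHom M P a ∧ IsRepHom P N b ∧ b.comp a = f

/-- The stable endomorphism ring `End_{kG}(M)/(proj)` is equal to `k`:
the identity does not factor through a projective module, and every
endomorphism is congruent to a scalar modulo endomorphisms factoring
through projectives. -/
def HasStableEndoK (M : GRep R G) : Prop :=
  (¬ FactorsThruProj M M LinearMap.id) ∧
  ∀ f : M.V →ₗ[R] M.V, IsRepHom M M f →
    ∃ c : R, FactorsThruProj M M (f - c • LinearMap.id)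

/-- `N` is a (first) syzygy `Ω M` of `M`: the kernel of a projective cover of `M`. -/
def IsSyzygy (M N : GRep R G) : Prop :=
  ∃ (P : GRep R G) (π : P.V →ₗ[R] M.V),
    IsProjectiveRep P ∧ IsRepHom P M π ∧ Function.Surjective π ∧
    (∀ Q : Submodule R P.V, IsSubrep P Q → Q ⊔ LinearMap.ker π = ⊤ → Q = ⊤) ∧
    IsoRep (P.sub (LinearMap.ker π)) N

/-- `N` is an `n`-th syzygy `Ω^n M` of `M`. -/
def IsNthSyzygy : ℕ → GRep R G → GRep R G → Prop
  | 0, M, N => IsoRep M N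
  | n + 1, M, N => ∃ M' : GRep R G, IsSyzygy M M' ∧ IsNthSyzygy n M' N

/-- `dim_k Ext^1_{kG}(M, N) = d`, expressed via an arbitrary projective
presentation `0 → K → P → M → 0` as
`dim Hom_{kG}(K, N) = d + dim (image of Hom_{kG}(P, N) → Hom_{kG}(K, N))`. -/
def Ext1DimEq (M N : GRep R G) (d : ℕ) : Prop :=
  ∀ (P : GRep R G) (π : P.V →ₗ[R] M.V),
    IsProjectiveRep P → IsRepHom P M π → Function.Surjective π →
    Module.finrank R ↥(homSub (P.sub (LinearMap.ker π)) N) =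
      d + Module.finrank R
        ↥(Submodule.map (LinearMap.lcomp R N.V (LinearMap.ker π).subtype) (homSub P N))

/-- `Ext^1_{kG}(A, B) = 0`: every short exact sequence `0 → B → E → A → 0` splits. -/
def Ext1Vanishes (A B : GRep R G) : Prop :=
  ∀ (E : GRep R G) (i : B.V →ₗ[R] E.V) (pr : E.V →ₗ[R] A.V),
    IsRepHom B E i → IsRepHom E A pr → Function.Injective i → Function.Surjective pr →
    LinearMap.range i = LinearMap.ker pr →
    ∃ s : A.V →ₗ[R] E.V, IsRepHom A E s ∧ pr.comp s = LinearMap.id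

/-- The data of a non-split short exact sequence `0 → B → E → A → 0` of
`RG`-modules. -/
def IsNonSplitSES (A B E : GRep R G) (i : B.V →ₗ[R] E.V) (pr : E.V →ₗ[R] A.V) : Prop :=
  IsRepHom B E i ∧ IsRepHom E A pr ∧ Function.Injective i ∧ Function.Surjective pr ∧
  LinearMap.range i = LinearMap.ker pr ∧
  ¬ ∃ s : A.V →ₗ[R] E.V, IsRepHom A E s ∧ pr.comp s = LinearMap.id

/-- The carrier of the representation of `G` induced from a representation `U` of
a subgroup `L` (realized, as usual for finite groups, as the space of
`U`-valued functions `f` on `G` with `f(lg) = l • f(g)`, with `G` acting by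
right translation). -/
def indCarrier (L : Subgroup G) (U : GRep R ↥L) : Submodule R (G → U.V) where
  carrier := {f | ∀ (l : ↥L) (g : G), f ((l : G) * g) = U.ρ l (f g)}
  add_mem' := by
    intro f₁ f₂ h₁ h₂ l g
    simp [h₁ l g, h₂ l g]
  zero_mem' := by
    intro l g
    simp
  smul_mem' := by
    intro c f h l g
    simp [h l g]

/-- The representation of `G` induced from a representation `U` of the subgroup `L`. -/
def ind (L : Subgroup G) (U : GRep R ↥L) : GRep R G where
  V := ↥(indCarrier L U)
  ρ := {
    toFun := fun x =>
      { toFun := fun f => ⟨fun g => (f : G → U.V) (g * x), by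
          intro l g
          have h := f.property l (g * x)
          simpa [mul_assoc] using h⟩
        map_add' := fun f₁ f₂ => by
          apply Subtype.ext
          funext g
          simp
        map_smul' := fun c f => by
          apply Subtype.ext
          funext g
          simp }
    map_one' := by
      refine LinearMap.ext fun f => Subtype.ext (funext fun g => ?_)
      simp
    map_mul' := fun x y => by
      refine LinearMap.ext fun f => Subtype.ext (funext fun g => ?_)
      simp [mul_assoc] }

/-- Base change of a representation along `R → S`. -/
def baseChange (S : Type) [CommRing S] [Algebra R S] (M : GRep R G) : GRep S G where
  V := S ⊗[R] M.V
  ρ := (Module.End.baseChangeHom R S M.V).toRingHom.toMonoidHom.comp M.ρ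

end GRep




/-- The inflation of a representation of `H` along a group homomorphism `G →* H`. -/
def GRep.infl {R : Type} [CommRing R] {G H : Type} [Group G] [Group H]
    (φ : G →* H) (M : GRep R H) : GRep R G where
  V := M.V
  ρ := M.ρ.comp φ

/-! ### Universal deformation rings -/

/-- The canonical residue map `W(k) → k` (the zeroth component). -/
def wres (p : ℕ) [Fact p.Prime] (k : Type) [CommRing k] : WittVector p k →+* k :=
  WittVector.ghostComponent 0

/-- An object of the category `Ĉ`: a complete local commutative Noetherian
`W(k)`-algebra with residue field `k` (the residue field identification is
recorded by the surjection `res`, whose kernel is the maximal ideal, and is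
required to be compatible with the canonical residue map of `W(k)`). -/
structure DefRing (p : ℕ) [Fact p.Prime] (k : Type) [Field k] : Type 1 where
  R : Type
  [cr : CommRing R]
  [alg : Algebra (WittVector p k) R]
  noeth : IsNoetherianRing R
  isLocal : IsLocalRing R
  res : R →+* k
  res_surjective : Function.Surjective res
  ker_nonunits : ∀ x ∈ RingHom.ker res, ¬ IsUnit x
  complete : IsAdicComplete (RingHom.ker res) R
  res_algebraMap : ∀ w, res (algebraMap (WittVector p k) R w) = wres p k w

attribute [instance] DefRing.cr DefRing.alg

/-- A morphism in the category `Ĉ`: a (local) `W(k)`-algebra homomorphism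
inducing the identity on the residue field `k`. -/
@[ext]
structure DefHom {p : ℕ} [Fact p.Prime] {k : Type} [Field k] (A B : DefRing p k) where
  toRingHom : A.R →+* B.R
  algebraMap_comp : ∀ w, toRingHom (algebraMap (WittVector p k) A.R w)
    = algebraMap (WittVector p k) B.R w
  res_comp : ∀ x, B.res (toRingHom x) = A.res x

/-- A lift of the `kG`-module `M` over `A ∈ Ĉ`: a finitely generated free
`A`-module `X` with an action of `G`, together with an identification of
`k ⊗_A X` with `M` (recorded by the `A.res`-semilinear, `G`-equivariant
surjection `red : X → M.V` whose kernel is `m_A · X`). -/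
structure Lift {p : ℕ} [Fact p.Prime] {k : Type} [Field k] (A : DefRing p k)
    {G : Type} [Group G] (M : GRep k G) : Type 1 where
  X : Type
  [acg : AddCommGroup X]
  [mod : Module A.R X]
  free : Module.Free A.R X
  fin : Module.Finite A.R X
  ρ : Representation A.R G X
  red : X →+ M.V
  red_surjective : Function.Surjective red
  red_smul : ∀ (a : A.R) (x : X), red (a • x) = A.res a • red x
  red_ker : ∀ x : X, red x = 0 ↔ x ∈ (RingHom.ker A.res) • (⊤ : Submodule A.R X)
  red_equivariant : ∀ (g : G) (x : X), red (ρ g x) = M.ρ g (red x)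

attribute [instance] Lift.acg Lift.mod

/-- The lift `L` over `B` is (isomorphic to) the pushforward of the lift `U`
over `A` along `α : A → B`. -/
def Lift.PushesTo {p : ℕ} [Fact p.Prime] {k : Type} [Field k] {A B : DefRing p k}
    {G : Type} [Group G] {M : GRep k G} (α : DefHom A B) (U : Lift A M) (L : Lift B M) :
    Prop :=
  ∃ f : U.X →+ L.X,
    (∀ (a : A.R) (x : U.X), f (a • x) = α.toRingHom a • f x) ∧
    (∀ (g : G) (x : U.X), f (U.ρ g x) = L.ρ g (f x)) ∧
    (∀ x, L.red (f x) = U.red x) ∧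
    Submodule.span B.R (Set.range f) = ⊤

/-- `(𝓡, U)` is a universal deformation of `M`: every lift of `M` over every
`A ∈ Ĉ` arises from `U` via a unique morphism `𝓡 → A`. -/
def IsUniversalLift {p : ℕ} [Fact p.Prime] {k : Type} [Field k]
    {G : Type} [Group G] {M : GRep k G} (𝓡 : DefRing p k) (U : Lift 𝓡 M) : Prop :=
  ∀ (A : DefRing p k) (L : Lift A M), ∃! α : DefHom 𝓡 A, Lift.PushesTo α U L

/-- `M` has a universal deformation ring. -/
def HasUniversalDefRing (p : ℕ) [Fact p.Prime] (k : Type) [Field k]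
    {G : Type} [Group G] (M : GRep k G) : Prop :=
  ∃ (𝓡 : DefRing p k) (U : Lift 𝓡 M), IsUniversalLift 𝓡 U

/-- Two objects of `Ĉ` are isomorphic as `W(k)`-algebras. -/
def DefRingIso {p : ℕ} [Fact p.Prime] {k : Type} [Field k] (A B : DefRing p k) : Prop :=
  ∃ e : A.R ≃+* B.R, ∀ w,
    e (algebraMap (WittVector p k) A.R w) = algebraMap (WittVector p k) B.R w

/-- `A ∈ Ĉ` is isomorphic, as a `W(k)`-algebra, to the ring `S` whose
`W(k)`-algebra structure is given by `f`. -/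
def DefRingIsoTo {p : ℕ} [Fact p.Prime] {k : Type} [Field k] (A : DefRing p k)
    (S : Type) [CommRing S] (f : WittVector p k →+* S) : Prop :=
  ∃ e : A.R ≃+* S, ∀ w, e (algebraMap (WittVector p k) A.R w) = f w

/-- A `W(k)G`-module, finitely generated and free over `W(k)`, defining a lift of
the `kG`-module `M` over `W = W(k)`; i.e. `k ⊗_W X ≅ M` (recorded by the
residue-semilinear, `G`-equivariant surjection `red` with kernel `p·X`). -/
structure WLift (p : ℕ) [Fact p.Prime] (k : Type) [Field k]
    {G : Type} [Group G] (M : GRep k G) : Type 1 where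
  XR : GRep (WittVector p k) G
  free : Module.Free (WittVector p k) XR.V
  fin : Module.Finite (WittVector p k) XR.V
  red : XR.V →+ M.V
  red_surjective : Function.Surjective red
  red_smul : ∀ (a : WittVector p k) (x : XR.V), red (a • x) = wres p k a • red x
  red_ker : ∀ x : XR.V, red x = 0 ↔ ∃ y : XR.V, x = (p : WittVector p k) • y
  red_equivariant : ∀ (g : G) (x : XR.V), red (XR.ρ g x) = M.ρ g (red x)

instance : Fact (Nat.Prime 2) := ⟨Nat.prime_two⟩

/-! The kernel of `T₁` is a normal subgroup of `S₄`; if it contained the transposition `t` it would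
contain every transposition, hence all of `S₄`, and then every line of `T₁` would be a
subrepresentation, contradicting simplicity in dimension 2. So some `v` has `t v ≠ v`. Since the
only eigenvalue of an involution in characteristic 2 is 1, the vectors `v, t v` are linearly
independent, hence a basis of `T₁`, and `v` generates `T₁` freely over `k⟨t⟩`. -/

theorem Equiv.Perm.normal_eq_top_of_isSwap_mem {α : Type*} [DecidableEq α] [Finite α]
    (N : Subgroup (Equiv.Perm α)) [N.Normal] {σ : Equiv.Perm α} (hσ : σ.IsSwap) (hN : σ ∈ N) :
    N = ⊤ := by
  rw [eq_top_iff, ← Equiv.Perm.closure_isSwap, Subgroup.closure_le]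
  rintro τ ⟨a, b, hab, rfl⟩
  obtain ⟨c, d, hcd, rfl⟩ := hσ
  obtain ⟨g, hg⟩ := isConj_iff.mp (Equiv.Perm.isConj_swap hcd hab)
  exact hg ▸ Subgroup.Normal.conj_mem inferInstance _ hN g

theorem linearIndependent_pair_of_involutive_of_charTwo {k V : Type*} [Field k] [CharP k 2]
    [AddCommGroup V] [Module k V] {f : V →ₗ[k] V} (hf : ∀ x, f (f x) = x) {v : V}
    (hv : f v ≠ v) : LinearIndependent k ![v, f v] := by
  rw [LinearIndependent.pair_iff]
  intro a b hab
  have hab_f : b • v + a • f v = 0 := by simpa [hf, add_comm] using congrArg f hab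
  have hw : v + f v ≠ 0 := fun h => hv <| by
    rw [← neg_eq_of_add_eq_zero_right h, ← neg_one_smul k v, CharTwo.neg_eq, one_smul]
  have hsum : (a + b) • (v + f v) = 0 :=
    calc (a + b) • (v + f v) = (a • v + b • f v) + (b • v + a • f v) := by module
      _ = 0 := by rw [hab, hab_f, add_zero]
  have hba : b = a := by
    rw [← sub_eq_zero, CharTwo.sub_eq_add, add_comm]
    exact (smul_eq_zero.mp hsum).resolve_right hw
  subst hba
  have hb : b = 0 := (smul_eq_zero.mp (by rw [smul_add]; exact hab)).resolve_right hw
  exact ⟨hb, hb⟩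

namespace GRep

variable {R : Type} [CommRing R] {G : Type} [Group G]

theorem isoRep_reg_of_basis_orbit (M : GRep R G) (v : M.V) (b : Module.Basis G R M.V)
    (hb : ∀ g, b g = M.ρ g v) : IsoRep M (reg R G) := by
  let e : M.V ≃ₗ[R] (G →₀ R) := b.equiv (Finsupp.basisSingleOne (R := R)) (Equiv.refl G)
  refine ⟨e, fun g => b.ext fun h => ?_⟩
  have hgh : M.ρ g (b h) = b (g * h) := by rw [hb, hb, map_mul, Module.End.mul_apply]
  show e (M.ρ g (b h)) = Finsupp.lmapDomain R R (g * ·) (e (b h))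
  rw [hgh, Module.Basis.equiv_apply, Module.Basis.equiv_apply]
  simp

theorem isoRep_res_zpowers_reg_of_basis {x : G} {n : ℕ} (hx : orderOf x = n) (hn : 0 < n)
    (M : GRep R G) (v : M.V) (b : Module.Basis (Fin n) R M.V)
    (hb : ∀ i : Fin n, b i = M.ρ (x ^ (i : ℕ)) v) :
    IsoRep (res (Subgroup.zpowers x) M) (reg R (Subgroup.zpowers x)) := by
  subst hx
  let e := finEquivZPowers (orderOf_pos_iff.mp hn)
  refine isoRep_reg_of_basis_orbit (res _ M) v (b.reindex e) fun g => ?_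
  obtain ⟨i, rfl⟩ := e.surjective g
  show b.reindex e (e i) = M.ρ (e i) v
  rw [Module.Basis.reindex_apply, e.symm_apply_apply, hb, finEquivZPowers_apply]

theorem IsSimpleRep.finrank_eq_one_of_forall_eq_one {k : Type} [Field k] {M : GRep k G}
    (hM : IsSimpleRep M) (htriv : ∀ g, M.ρ g = 1) : Module.finrank k M.V = 1 := by
  obtain ⟨hnt, hsub⟩ := hM
  obtain ⟨v, hv⟩ := exists_ne (0 : M.V)
  have hstable : IsSubrep M (Submodule.span k {v}) := fun g x hx => by simpa [htriv g] using hx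
  rcases hsub _ hstable with hbot | htop
  · exact absurd ((Submodule.mem_bot k).mp (hbot ▸ Submodule.mem_span_singleton_self v)) hv
  · rw [← finrank_top, ← htop, finrank_span_singleton hv]

theorem IsSimpleRep.exists_apply_ne_of_isSwap {k : Type} [Field k] {α : Type}
    [DecidableEq α] [Finite α] {M : GRep k (Equiv.Perm α)} (hM : IsSimpleRep M)
    (hdim : Module.finrank k M.V ≠ 1) {t : Equiv.Perm α} (ht : t.IsSwap) :
    ∃ v, M.ρ t v ≠ v := by
  by_contra! h
  have hker : M.ρ.ker = ⊤ :=
    Equiv.Perm.normal_eq_top_of_isSwap_mem _ ht (MonoidHom.mem_ker.mpr (LinearMap.ext h))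
  exact hdim <| hM.finrank_eq_one_of_forall_eq_one fun g =>
    MonoidHom.mem_ker.mp (hker ▸ Subgroup.mem_top g)

end GRep

theorem statement_13_general (k : Type) [Field k] [CharP k 2]
    (T₁ : GRep k (Equiv.Perm (Fin 4))) (hsimp : GRep.IsSimpleRep T₁)
    (hdim : Module.finrank k T₁.V = 2)
    (t : Equiv.Perm (Fin 4)) (ht : t.IsSwap) :
    GRep.IsoRep (GRep.res (Subgroup.zpowers t) T₁)
      (GRep.reg k ↥(Subgroup.zpowers t)) := by
  obtain ⟨v, hv⟩ := hsimp.exists_apply_ne_of_isSwap (by omega) ht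
  have hinv : ∀ x, T₁.ρ t (T₁.ρ t x) = x := fun x => by
    rw [← Module.End.mul_apply, ← map_mul, ← pow_two, ← ht.orderOf, pow_orderOf_eq_one,
      map_one, Module.End.one_apply]
  have hli := linearIndependent_pair_of_involutive_of_charTwo hinv hv
  refine GRep.isoRep_res_zpowers_reg_of_basis ht.orderOf two_pos T₁ v
    (basisOfLinearIndependentOfCardEqFinrank hli (by simp [hdim])) fun i => ?_
  fin_cases i <;> simp

/-- The restriction of the unique 2-dimensional simple `kS₄`-module
`T₁` to the subgroup `C` generated by any transposition is a free `kC`-module of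
rank 1. -/
theorem statement_13 (k : Type) [Field k] [IsAlgClosed k] [CharP k 2]
    (T₁ : GRep k (Equiv.Perm (Fin 4))) (hsimp : GRep.IsSimpleRep T₁)
    (hdim : Module.finrank k T₁.V = 2)
    (t : Equiv.Perm (Fin 4)) (ht : t.IsSwap) :
    GRep.IsoRep (GRep.res (Subgroup.zpowers t) T₁)
      (GRep.reg k ↥(Subgroup.zpowers t)) :=
  statement_13_general k T₁ hsimp hdim t ht
end
end

section
/- Let A₄ ≤ S₄ be the alternating group and let E be any non-trivial one-dimensional kA₄-module. Then the induced module Ind_{A₄}^{S₄} E is isomorphic to T₁, the unique 2-dimensional simple kS₄-module. -/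
/-! Shared definitions: representations of a group over a commutative ring,
equivariant maps, sub/quotient representations, projectivity, syzygies,
stable endomorphism rings, Ext^1 dimensions, induced/restricted representations,
Witt vectors, lifts and universal deformation rings. -/

open scoped TensorProduct

noncomputable section

/-! Because `ind` is realised by functions on `S₄`, it is right adjoint to restriction: a nonzero
`A₄`-map `T₁ → E` yields a nonzero, hence injective, `S₄`-map `T₁ → Ind E`, and since
`[S₄ : A₄] = 2` the space `Ind E` has dimension at most 2, so this map is an isomorphism.

To find the `A₄`-map, write `E` as a character: in characteristic 2 the Klein four group `V₄` acts
trivially on it, and a 3-cycle `σ` acts by a primitive cube root of unity `ω`. On `T₁` the normal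
2-subgroup `V₄` acts trivially, `σ` has no fixed vector (otherwise `A₄` acts trivially and `T₁`
cannot be simple of dimension 2), and `τ σ τ⁻¹ ≡ σ²` modulo `V₄`, so `ω` is an eigenvalue of `σ`.
A linear form on `T₁` vanishing on the image of `σ - ω` is the required `A₄`-map. -/

open Equiv Equiv.Perm Module

theorem Subgroup.closure_preimage_subtype_eq_top {G : Type*} [Group G] {K : Subgroup G}
    {s : Set G} (h : Subgroup.closure s = K) : Subgroup.closure (K.subtype ⁻¹' s) = ⊤ := by
  subst h
  exact Subgroup.closure_closure_coe_preimage

namespace GRep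

section CommRing

variable {R : Type} [CommRing R] {G : Type} [Group G]

theorem ρ_mul_apply (M : GRep R G) (a b : G) (x : M.V) :
    M.ρ (a * b) x = M.ρ a (M.ρ b x) := by
  rw [map_mul, Module.End.mul_apply]

theorem ρ_ρ_of_mul_self (M : GRep R G) {g : G} (hg : g * g = 1) (x : M.V) :
    M.ρ g (M.ρ g x) = x := by
  rw [← ρ_mul_apply, hg, map_one, Module.End.one_apply]

theorem fixed_of_mem_closure (M : GRep R G) {S : Set G} {x : M.V}
    (hS : ∀ s ∈ S, M.ρ s x = x) {g : G} (hg : g ∈ Subgroup.closure S) : M.ρ g x = x := by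
  induction hg using Subgroup.closure_induction with
  | mem s hs => exact hS s hs
  | one => simp
  | mul a b _ _ ha hb => rw [ρ_mul_apply, hb, ha]
  | inv a _ ha => rw [Representation.inv_apply_eq_iff, ha]

theorem isRepHom_of_closure_eq_top {M N : GRep R G} {f : M.V →ₗ[R] N.V} {S : Set G}
    (hS : Subgroup.closure S = ⊤) (h : ∀ s ∈ S, ∀ x, f (M.ρ s x) = N.ρ s (f x)) :
    IsRepHom M N f := by
  intro g
  ext x
  have hg : g ∈ Subgroup.closure S := hS ▸ Subgroup.mem_top g
  induction hg using Subgroup.closure_induction generalizing x with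
  | mem s hs => exact h s hs x
  | one => simp
  | mul a b _ _ ha hb =>
    simp only [LinearMap.comp_apply] at ha hb ⊢
    rw [ρ_mul_apply, ρ_mul_apply, ha, hb]
  | inv a _ ha =>
    simp only [LinearMap.comp_apply] at ha ⊢
    rw [← Representation.inv_apply_eq_iff, inv_inv, ← ha, Representation.self_inv_apply]

theorem IsRepHom.symm {M N : GRep R G} {e : M.V ≃ₗ[R] N.V}
    (he : IsRepHom M N (e : M.V →ₗ[R] N.V)) : IsRepHom N M (e.symm : N.V →ₗ[R] M.V) := by
  intro g
  ext y
  apply e.injective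
  have := LinearMap.congr_fun (he g) (e.symm y)
  simp_all

theorem injective_of_isSimpleRep {M N : GRep R G} (hM : IsSimpleRep M) {f : M.V →ₗ[R] N.V}
    (hf : IsRepHom M N f) (hf0 : f ≠ 0) : Function.Injective f := by
  have hker : IsSubrep M (LinearMap.ker f) := fun g x hx => by
    rw [LinearMap.mem_ker] at hx ⊢
    rw [← LinearMap.comp_apply, hf g, LinearMap.comp_apply, hx, map_zero]
  rcases hM.2 _ hker with h | h
  · exact LinearMap.ker_eq_bot.mp h
  · exact absurd (LinearMap.ker_eq_top.mp h) hf0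

theorem isSubrep_invariants_res (M : GRep R G) (N : Subgroup G) [N.Normal] :
    IsSubrep M (M.res N).ρ.invariants := by
  intro g x hx n
  have hconj : g⁻¹ * n * g ∈ N := by simpa using ‹N.Normal›.conj_mem _ n.2 g⁻¹
  change M.ρ n (M.ρ g x) = M.ρ g x
  rw [← ρ_mul_apply, show (n : G) * g = g * (g⁻¹ * n * g) by group, ρ_mul_apply]
  exact congrArg (M.ρ g) (hx ⟨_, hconj⟩)

theorem exists_injective_ind_to_prod (L : Subgroup G) (hL : L.index = 2) (U : GRep R L) :
    ∃ ev : (ind L U).V →ₗ[R] U.V × U.V, Function.Injective ev := by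
  obtain ⟨a, ha⟩ := Subgroup.index_eq_two_iff.mp hL
  refine ⟨(LinearMap.proj 1 ∘ₗ (indCarrier L U).subtype).prod
    (LinearMap.proj a⁻¹ ∘ₗ (indCarrier L U).subtype), ?_⟩
  intro f f' hff'
  obtain ⟨h1, h2⟩ : f.1 1 = f'.1 1 ∧ f.1 a⁻¹ = f'.1 a⁻¹ := Prod.ext_iff.mp hff'
  refine Subtype.ext <| funext fun g => ?_
  by_cases hg : g ∈ L
  · have e := f.2 ⟨g, hg⟩ 1
    have e' := f'.2 ⟨g, hg⟩ 1
    simp only [mul_one] at e e'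
    rw [e, e', h1]
  · have hga : g * a ∈ L := ((ha g).or).resolve_right hg
    have e := f.2 ⟨g * a, hga⟩ a⁻¹
    have e' := f'.2 ⟨g * a, hga⟩ a⁻¹
    simp only [mul_inv_cancel_right] at e e'
    rw [e, e', h2]

variable (L : Subgroup G) {M : GRep R G} {U : GRep R L}

def indLift (ψ : M.V →ₗ[R] U.V) (hψ : IsRepHom (M.res L) U ψ) : M.V →ₗ[R] (ind L U).V where
  toFun m := ⟨fun g => ψ (M.ρ g m), fun l g => by
    show ψ (M.ρ (l * g) m) = U.ρ l (ψ (M.ρ g m))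
    rw [ρ_mul_apply]
    exact LinearMap.congr_fun (hψ l) (M.ρ g m)⟩
  map_add' m m' := Subtype.ext <| funext fun g => by simp; rfl
  map_smul' c m := Subtype.ext <| funext fun g => by simp; rfl

theorem isRepHom_indLift (ψ : M.V →ₗ[R] U.V) (hψ : IsRepHom (M.res L) U ψ) :
    IsRepHom M (ind L U) (indLift L ψ hψ) := by
  intro x
  ext m
  refine Subtype.ext <| funext fun g => ?_
  show ψ (M.ρ g (M.ρ x m)) = ψ (M.ρ (g * x) m)
  rw [ρ_mul_apply]

theorem indLift_ne_zero {ψ : M.V →ₗ[R] U.V} (hψ : IsRepHom (M.res L) U ψ) (hψ0 : ψ ≠ 0) :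
    indLift L ψ hψ ≠ 0 := by
  intro h
  apply hψ0
  ext m
  have h1 : ψ (M.ρ 1 m) = 0 := congrArg (fun f : (ind L U).V => f.1 1) (LinearMap.congr_fun h m)
  simpa using h1

end CommRing

section Field

variable {k : Type} [Field k] {G : Type} [Group G]

theorem isoRep_ind_of_isRepHom_res {L : Subgroup G} (hL : L.index = 2) {U : GRep k L}
    [FiniteDimensional k U.V] {M : GRep k G} (hM : IsSimpleRep M)
    (hdim : finrank k M.V = 2 * finrank k U.V) {ψ : M.V →ₗ[k] U.V}
    (hψ : IsRepHom (M.res L) U ψ) (hψ0 : ψ ≠ 0) : IsoRep (ind L U) M := by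
  obtain ⟨ev, hev⟩ := exists_injective_ind_to_prod L hL U
  have : FiniteDimensional k (ind L U).V := .of_injective ev hev
  have hinj := injective_of_isSimpleRep hM (isRepHom_indLift L ψ hψ) (indLift_ne_zero L hψ hψ0)
  have : FiniteDimensional k M.V := .of_injective _ hinj
  have hle := LinearMap.finrank_le_finrank_of_injective hev
  have hge := LinearMap.finrank_le_finrank_of_injective hinj
  rw [finrank_prod] at hle
  let e := LinearMap.linearEquivOfInjective _ hinj (by omega)
  exact ⟨e.symm, IsRepHom.symm (e := e) (isRepHom_indLift L ψ hψ)⟩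

theorem pow_eq_one_of_apply_eq_smul (M : GRep k G) {g : G} {n : ℕ} (hg : g ^ n = 1) {v : M.V}
    (hv : v ≠ 0) {μ : k} (hgv : M.ρ g v = μ • v) : μ ^ n = 1 := by
  have hpow : ∀ m : ℕ, M.ρ (g ^ m) v = μ ^ m • v := by
    intro m
    induction m with
    | zero => simp
    | succ m ih => rw [pow_succ, ρ_mul_apply, hgv, map_smul, ih, smul_smul, ← pow_succ']
  have h := hpow n
  rw [hg, map_one, Module.End.one_apply] at h
  exact smul_left_injective k hv (h.symm.trans (one_smul k v).symm)

theorem finrank_eq_one_of_isSimpleRep_of_fixed {M : GRep k G} (hM : IsSimpleRep M) {u : M.V}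
    (hu : u ≠ 0) (hfix : ∀ g, M.ρ g u = u) : finrank k M.V = 1 := by
  have hspan : IsSubrep M (Submodule.span k {u}) := fun g x hx => by
    obtain ⟨c, rfl⟩ := Submodule.mem_span_singleton.mp hx
    rw [map_smul, hfix]
    exact Submodule.smul_mem _ c (Submodule.mem_span_singleton_self u)
  rcases hM.2 _ hspan with h | h
  · exact absurd (Submodule.span_singleton_eq_bot.mp h) hu
  · rw [← finrank_top, ← h, finrank_span_singleton hu]

end Field

end GRep

theorem neg_eq_self_of_charTwo (k : Type*) {V : Type*} [Field k] [CharP k 2] [AddCommGroup V]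
    [Module k V] (v : V) : -v = v := by
  rw [← neg_one_smul k v, CharTwo.neg_eq, one_smul]

section CharTwo

variable {k V : Type*} [Field k] [CharP k 2] [AddCommGroup V] [Module k V]

theorem exists_fixed_of_involutive [Nontrivial V] (f : V →ₗ[k] V) (hf : ∀ x, f (f x) = x) :
    ∃ v ≠ 0, f v = v := by
  by_cases hid : ∀ x, f x = x
  · obtain ⟨v, hv⟩ := exists_ne (0 : V)
    exact ⟨v, hv, hid v⟩
  · push Not at hid
    obtain ⟨x, hx⟩ := hid
    refine ⟨f x - x, sub_ne_zero.mpr hx, ?_⟩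
    rw [map_sub, hf, ← neg_sub, neg_eq_self_of_charTwo k]

theorem exists_common_fixed_of_involutive [Nontrivial V] (P Q : V →ₗ[k] V)
    (hP : ∀ x, P (P x) = x) (hQ : ∀ x, Q (Q x) = x) (hPQ : ∀ x, P (Q x) = Q (P x)) :
    ∃ v ≠ 0, P v = v ∧ Q v = v := by
  obtain ⟨u, hu, hPu⟩ := exists_fixed_of_involutive P hP
  by_cases hQu : Q u = u
  · exact ⟨u, hu, hPu, hQu⟩
  · -- `Q u - u` is fixed by `Q` in characteristic two, and by `P` since `P` commutes with `Q`
    refine ⟨Q u - u, sub_ne_zero.mpr hQu, by rw [map_sub, hPQ, hPu], ?_⟩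
    rw [map_sub, hQ, ← neg_sub, neg_eq_self_of_charTwo k]

theorem eq_id_of_involutive_of_finrank_eq_one (hV : finrank k V = 1) (f : V →ₗ[k] V)
    (hf : ∀ x, f (f x) = x) : f = LinearMap.id := by
  have : Nontrivial V := Module.nontrivial_of_finrank_eq_succ hV
  obtain ⟨v, hv, hfv⟩ := exists_fixed_of_involutive f hf
  ext w
  obtain ⟨c, rfl⟩ := exists_smul_eq_of_finrank_eq_one hV hv w
  rw [map_smul, hfv, LinearMap.id_apply]

end CharTwo

theorem Module.End.exists_dual_eigenvector {K V : Type*} [Field K] [AddCommGroup V] [Module K V]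
    [FiniteDimensional K V] {f : Module.End K V} {μ : K} {v : V} (hv : v ≠ 0)
    (hfv : f v = μ • v) : ∃ φ : V →ₗ[K] K, φ ≠ 0 ∧ φ ∘ₗ f = μ • φ := by
  set g := f - μ • (1 : Module.End K V)
  have hns : ¬ Function.Surjective g := by
    rw [← LinearMap.injective_iff_surjective, injective_iff_map_eq_zero]
    push Not
    exact ⟨v, by simp [g, hfv], hv⟩
  obtain ⟨φ, hφ, hle⟩ := (LinearMap.range g).exists_le_ker_of_lt_top
    (lt_top_iff_ne_top.mpr (mt LinearMap.range_eq_top.mp hns))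
  refine ⟨φ, hφ, LinearMap.ext fun x => ?_⟩
  have : φ (g x) = 0 := hle ⟨x, rfl⟩
  simpa [g, sub_eq_zero] using this

theorem eq_or_eq_sq_of_pow_three_eq_one {K : Type*} [Field K] {μ ω : K} (hμ : μ ^ 3 = 1)
    (hμ1 : μ ≠ 1) (hω : ω ^ 3 = 1) (hω1 : ω ≠ 1) : ω = μ ∨ ω = μ ^ 2 := by
  have hq : μ ^ 2 + μ + 1 = 0 := by
    have : (μ - 1) * (μ ^ 2 + μ + 1) = 0 := by linear_combination hμ
    exact (mul_eq_zero.mp this).resolve_left (sub_ne_zero.mpr hμ1)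
  -- `(X - 1) (X - μ) (X - μ²) = X³ - 1` because `1 + μ + μ² = 0`
  have : (ω - 1) * ((ω - μ) * (ω - μ ^ 2)) = 0 := by
    linear_combination hω - ω ^ 2 * hq + ω * hq + ω * hμ - hμ
  rcases mul_eq_zero.mp ((mul_eq_zero.mp this).resolve_left (sub_ne_zero.mpr hω1)) with h | h
  · exact .inl (sub_eq_zero.mp h)
  · exact .inr (sub_eq_zero.mp h)

namespace S4

def σ : Perm (Fin 4) := swap 1 2 * swap 2 3
def τ : Perm (Fin 4) := swap 0 1
def δ₁ : Perm (Fin 4) := swap 0 1 * swap 2 3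
def δ₂ : Perm (Fin 4) := swap 0 2 * swap 1 3

theorem σ_mem_alternatingGroup : σ ∈ alternatingGroup (Fin 4) := by
  rw [mem_alternatingGroup]; decide

theorem δ₁_mem_alternatingGroup : δ₁ ∈ alternatingGroup (Fin 4) := by
  rw [mem_alternatingGroup]; decide

theorem closure_σ_τ : Subgroup.closure {σ, τ} = ⊤ := by
  rw [eq_top_iff, ← closure_cycle_adjacent_swap isCycle_finRotate support_finRotate 0,
    Subgroup.closure_le]
  have hσ : σ ∈ Subgroup.closure {σ, τ} := Subgroup.subset_closure (by simp)
  have hτ : τ ∈ Subgroup.closure {σ, τ} := Subgroup.subset_closure (by simp)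
  rintro p (rfl | rfl)
  · exact (by decide : finRotate 4 = τ * σ) ▸ mul_mem hτ hσ
  · exact (by decide : swap 0 (finRotate 4 0) = τ) ▸ hτ

theorem alternatingGroup_eq_closure : alternatingGroup (Fin 4) = Subgroup.closure {σ, δ₁} := by
  have hσ : σ ∈ Subgroup.closure {σ, δ₁} := Subgroup.subset_closure (by simp)
  have hδ : δ₁ ∈ Subgroup.closure {σ, δ₁} := Subgroup.subset_closure (by simp)
  have hwords : ∀ p : Perm (Fin 4), sign p = 1 →
      ∃ a c : Fin 3, ∃ b : Fin 2, p = σ ^ (a : ℕ) * δ₁ ^ (b : ℕ) * σ ^ (c : ℕ) := by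
    decide
  refine le_antisymm (fun p hp => ?_) ?_
  · obtain ⟨a, c, b, rfl⟩ := hwords p hp
    exact mul_mem (mul_mem (pow_mem hσ _) (pow_mem hδ _)) (pow_mem hσ _)
  · rw [Subgroup.closure_le]
    rintro p (rfl | rfl)
    exacts [σ_mem_alternatingGroup, δ₁_mem_alternatingGroup]

theorem closure_preimage_alternatingGroup_subtype :
    Subgroup.closure ((alternatingGroup (Fin 4)).subtype ⁻¹' {σ, δ₁}) = ⊤ :=
  Subgroup.closure_preimage_subtype_eq_top alternatingGroup_eq_closure.symm

def kleinFour : Subgroup (Perm (Fin 4)) where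
  carrier := ↑({1, δ₁, δ₂, δ₁ * δ₂} : Finset (Perm (Fin 4)))
  one_mem' := by decide
  mul_mem' := by simp only [Finset.mem_coe]; decide
  inv_mem' := by simp only [Finset.mem_coe]; decide

theorem mem_kleinFour {n : Perm (Fin 4)} :
    n ∈ kleinFour ↔ n = 1 ∨ n = δ₁ ∨ n = δ₂ ∨ n = δ₁ * δ₂ := by
  change n ∈ ({1, δ₁, δ₂, δ₁ * δ₂} : Finset (Perm (Fin 4))) ↔ _
  simp

instance : kleinFour.Normal where
  conj_mem := by simp only [mem_kleinFour]; decide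

end S4

open S4

section TwoDimensionalSimple

variable {k : Type} [Field k] [CharP k 2] {T : GRep k (Perm (Fin 4))}

theorem GRep.IsSimpleRep.kleinFour_fixed (hT : T.IsSimpleRep) :
    ∀ n ∈ kleinFour, ∀ x, T.ρ n x = x := by
  have : Nontrivial T.V := hT.1
  obtain ⟨v, hv, h₁, h₂⟩ := exists_common_fixed_of_involutive (T.ρ δ₁) (T.ρ δ₂)
    (T.ρ_ρ_of_mul_self (by decide)) (T.ρ_ρ_of_mul_self (by decide))
    fun x => by rw [← GRep.ρ_mul_apply, (by decide : δ₁ * δ₂ = δ₂ * δ₁), GRep.ρ_mul_apply]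
  have hvW : v ∈ (T.res kleinFour).ρ.invariants := by
    rintro ⟨n, hn⟩
    change T.ρ n v = v
    rcases mem_kleinFour.mp hn with rfl | rfl | rfl | rfl
    · simp
    · exact h₁
    · exact h₂
    · rw [GRep.ρ_mul_apply, h₂, h₁]
  rcases hT.2 _ (T.isSubrep_invariants_res kleinFour) with h | h
  · exact absurd ((Submodule.eq_bot_iff _).mp h v hvW) hv
  · intro n hn x
    have hx : x ∈ (T.res kleinFour).ρ.invariants := h ▸ Submodule.mem_top
    exact hx ⟨n, hn⟩

theorem GRep.IsSimpleRep.eq_zero_of_alternatingGroup_fixed (hT : T.IsSimpleRep)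
    (h2 : finrank k T.V ≠ 1) {x : T.V} (hx : ∀ a ∈ alternatingGroup (Fin 4), T.ρ a x = x) :
    x = 0 := by
  have hxW : x ∈ (T.res (alternatingGroup (Fin 4))).ρ.invariants := fun a => hx a a.2
  rcases hT.2 _ (T.isSubrep_invariants_res (alternatingGroup (Fin 4))) with h | h
  · exact (Submodule.eq_bot_iff _).mp h x hxW
  · have : Nontrivial T.V := hT.1
    obtain ⟨u, hu, hτu⟩ := exists_fixed_of_involutive (T.ρ τ) (T.ρ_ρ_of_mul_self (by decide))
    have huW : u ∈ (T.res (alternatingGroup (Fin 4))).ρ.invariants := h ▸ Submodule.mem_top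
    have hσu : T.ρ σ u = u := huW ⟨σ, σ_mem_alternatingGroup⟩
    refine absurd (GRep.finrank_eq_one_of_isSimpleRep_of_fixed hT hu fun g =>
      T.fixed_of_mem_closure ?_ (closure_σ_τ ▸ Subgroup.mem_top g)) h2
    rintro s (rfl | rfl)
    exacts [hσu, hτu]

theorem GRep.IsSimpleRep.exists_eigenvector_σ [IsAlgClosed k] (hT : T.IsSimpleRep)
    (h2 : finrank k T.V = 2) {ω : k} (hω : ω ^ 3 = 1) (hω1 : ω ≠ 1) :
    ∃ v ≠ 0, T.ρ σ v = ω • v := by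
  have : Nontrivial T.V := hT.1
  have : FiniteDimensional k T.V := .of_finrank_pos (by omega)
  obtain ⟨μ, hμ⟩ := Module.End.exists_eigenvalue (T.ρ σ)
  obtain ⟨v, hv⟩ := hμ.exists_hasEigenvector
  have hσv : T.ρ σ v = μ • v := hv.apply_eq_smul
  have hμ3 : μ ^ 3 = 1 := T.pow_eq_one_of_apply_eq_smul (by decide) hv.2 hσv
  have hμ1 : μ ≠ 1 := by
    rintro rfl
    refine hv.2 (hT.eq_zero_of_alternatingGroup_fixed (by omega) fun a ha =>
      T.fixed_of_mem_closure ?_ (alternatingGroup_eq_closure ▸ ha))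
    rintro s (rfl | rfl)
    exacts [hσv.trans (one_smul k v), hT.kleinFour_fixed δ₁ (mem_kleinFour.mpr (by simp)) v]
  -- `τ` conjugates `σ` to `σ²` modulo the Klein four group, so `τ v` has eigenvalue `μ²`
  have hτv : T.ρ σ (T.ρ τ v) = μ ^ 2 • T.ρ τ v := by
    rw [← GRep.ρ_mul_apply, (by decide : σ * τ = τ * (δ₂ * (σ * σ))), GRep.ρ_mul_apply,
      GRep.ρ_mul_apply, hT.kleinFour_fixed δ₂ (mem_kleinFour.mpr (by simp)), GRep.ρ_mul_apply,
      hσv, map_smul, hσv, smul_smul, map_smul, sq]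
  have hτv0 : T.ρ τ v ≠ 0 := fun h => hv.2 <| by
    rw [← T.ρ_ρ_of_mul_self (by decide : τ * τ = 1) v, h, map_zero]
  rcases eq_or_eq_sq_of_pow_three_eq_one hμ3 hμ1 hω hω1 with rfl | rfl
  exacts [⟨v, hv.2, hσv⟩, ⟨_, hτv0, hτv⟩]

end TwoDimensionalSimple

namespace GRep

variable {k : Type} [Field k] [CharP k 2] {E : GRep k (alternatingGroup (Fin 4))}

theorem ρ_δ₁_eq_id (hE : finrank k E.V = 1) :
    E.ρ ⟨δ₁, δ₁_mem_alternatingGroup⟩ = LinearMap.id :=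
  eq_id_of_involutive_of_finrank_eq_one hE _ (E.ρ_ρ_of_mul_self (Subtype.ext (by decide)))

theorem exists_ρ_σ_eq_smul_id (hE : finrank k E.V = 1)
    (hnontriv : ¬ ∀ (g : alternatingGroup (Fin 4)) (x : E.V), E.ρ g x = x) :
    ∃ ω : k, ω ^ 3 = 1 ∧ ω ≠ 1 ∧ E.ρ ⟨σ, σ_mem_alternatingGroup⟩ = ω • LinearMap.id := by
  obtain ⟨ω, hω, -⟩ :=
    LinearMap.existsUnique_eq_smul_id_of_finrank_eq_one hE (E.ρ ⟨σ, σ_mem_alternatingGroup⟩)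
  refine ⟨ω, ?_, ?_, hω⟩
  · have : Nontrivial E.V := Module.nontrivial_of_finrank_eq_succ hE
    obtain ⟨e, he⟩ := exists_ne (0 : E.V)
    exact E.pow_eq_one_of_apply_eq_smul (g := ⟨σ, σ_mem_alternatingGroup⟩) (n := 3)
      (Subtype.ext (by decide)) he (by rw [hω]; rfl)
  · rintro rfl
    refine hnontriv fun g x => E.fixed_of_mem_closure ?_
      (closure_preimage_alternatingGroup_subtype ▸ Subgroup.mem_top g)
    rintro ⟨s, hs⟩ (rfl | rfl : s = σ ∨ s = δ₁)
    · rw [hω, one_smul, LinearMap.id_apply]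
    · rw [ρ_δ₁_eq_id hE, LinearMap.id_apply]

end GRep

theorem exists_isRepHom_res_alternatingGroup {k : Type} [Field k] [IsAlgClosed k] [CharP k 2]
    {T : GRep k (Perm (Fin 4))} (hT : T.IsSimpleRep) (h2 : finrank k T.V = 2)
    {E : GRep k (alternatingGroup (Fin 4))} (hE : finrank k E.V = 1)
    (hnontriv : ¬ ∀ (g : alternatingGroup (Fin 4)) (x : E.V), E.ρ g x = x) :
    ∃ ψ : T.V →ₗ[k] E.V, GRep.IsRepHom (T.res (alternatingGroup (Fin 4))) E ψ ∧ ψ ≠ 0 := by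
  obtain ⟨ω, hω3, hω1, hσ⟩ := GRep.exists_ρ_σ_eq_smul_id hE hnontriv
  obtain ⟨v, hv, hσv⟩ := hT.exists_eigenvector_σ h2 hω3 hω1
  have : FiniteDimensional k T.V := .of_finrank_pos (by omega)
  obtain ⟨φ, hφ, hφσ⟩ := Module.End.exists_dual_eigenvector hv hσv
  have : Nontrivial E.V := Module.nontrivial_of_finrank_eq_succ hE
  obtain ⟨e, he⟩ := exists_ne (0 : E.V)
  refine ⟨φ.smulRight e, GRep.isRepHom_of_closure_eq_top closure_preimage_alternatingGroup_subtype
    ?_, fun h => hφ (LinearMap.ext fun x => ?_)⟩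
  · rintro ⟨s, hs⟩ (rfl | rfl : s = σ ∨ s = δ₁) (x : T.V)
    · change φ (T.ρ σ x) • e = E.ρ ⟨σ, hs⟩ (φ x • e)
      rw [hσ, ← LinearMap.comp_apply φ, hφσ]
      simp [smul_smul, mul_comm]
    · change φ (T.ρ δ₁ x) • e = E.ρ ⟨δ₁, hs⟩ (φ x • e)
      rw [GRep.ρ_δ₁_eq_id hE, hT.kleinFour_fixed δ₁ (mem_kleinFour.mpr (by simp))]
      rfl
  · simpa [he] using LinearMap.congr_fun h x

/-- For any non-trivial one-dimensional `kA₄`-module `E`, the induced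
module `Ind_{A₄}^{S₄} E` is isomorphic to the unique 2-dimensional simple
`kS₄`-module `T₁`. -/
theorem statement_15 (k : Type) [Field k] [IsAlgClosed k] [CharP k 2]
    (E : GRep k ↥(alternatingGroup (Fin 4)))
    (hdim : Module.finrank k E.V = 1)
    (hnontriv : ¬ ∀ (g : ↥(alternatingGroup (Fin 4))) (x : E.V), E.ρ g x = x) :
    ∀ (T₁ : GRep k (Equiv.Perm (Fin 4))), GRep.IsSimpleRep T₁ →
      Module.finrank k T₁.V = 2 →
      GRep.IsoRep (GRep.ind (alternatingGroup (Fin 4)) E) T₁ := by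
  intro T₁ hsimp hT2
  have : FiniteDimensional k E.V := .of_finrank_pos (by omega)
  obtain ⟨ψ, hψ, hψ0⟩ := exists_isRepHom_res_alternatingGroup hsimp hT2 hdim hnontriv
  exact GRep.isoRep_ind_of_isRepHom_res alternatingGroup.index_eq_two hsimp (by omega) hψ hψ0
end
end
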